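/- Let 0 < α < d, 0 < λ < ∞. Set K(S) = min((λℓ_S)^α, 1)/(λ^α |S|). Let 1 < q < p < ∞, 1/r = 1/q − 1/p, and θ_1, θ_2 > 1 with 1/q = 1/(θ_2 p) + θ_1/r. Let v be a weight with ‖v‖_{L^{θ_1}(dx)}^{θ_1/r} < ∞, and let 𝒮 be an η-sparse family of dyadic cubes. Then [∑_{S∈𝒮} (K(S)|S| (v(S)/|S|)^{1/q})^r |E_𝒮(S)|]^{1/r} ≲ ‖v‖_{L^{θ_1}(dx)}^{θ_1/r} · sup_{S∈𝒮} K(S)|S| (v(S)/|S|)^{1/(θ_2 p)}. -/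

import Mathlib

open MeasureTheory ENNReal

/-- The dyadic cube `2^{-k}(m + [0,1)^d)` in `ℝ^d`. -/
def dyadicCube (d : ℕ) (k : ℤ) (m : Fin d → ℤ) :
    Set (EuclideanSpace ℝ (Fin d)) :=
  {x | ∀ i, x i ∈ Set.Ico ((2:ℝ) ^ (-k) * m i) ((2:ℝ) ^ (-k) * (m i + 1))}

/-!
Write `a_S` for the average of `v` over `S`. Splitting `a_S^{1/q} = a_S^{1/(θ₂p)} a_S^{θ₁/r}` and
bounding the first factor by the supremum reduces the claim to the sparse bound
`∑_S a_S^{θ₁} |E_S| ≲ ∫ v^{θ₁}`. For this, note that the sets `E_S` with `a_S > t` are disjoint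
and lie in the maximal dyadic cubes with average `> t` (these exist because `∫ v^{θ₁} < ∞` bounds
the volume of such cubes), so a Calderón–Zygmund argument bounds their total measure by
`(2/t) ∫_{2v > t} v`. Summing this weak-type bound over the levels `t = 2^n` (a discrete layer-cake
formula) gives the strong-type bound, as in the proof of `‖M v‖_{θ₁} ≲ ‖v‖_{θ₁}`.
-/

lemma ENNReal.zpow_rpow_comm (x : ℝ≥0∞) (n : ℤ) (e : ℝ) : (x ^ n) ^ e = (x ^ e) ^ n := by
  rw [← ENNReal.rpow_intCast_mul, mul_comm, ENNReal.rpow_mul_intCast]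

lemma ENNReal.ofReal_zpow {x : ℝ} (hx : 0 < x) (n : ℤ) :
    ENNReal.ofReal (x ^ n) = ENNReal.ofReal x ^ n := by
  rw [← Real.rpow_intCast, ← ENNReal.ofReal_rpow_of_pos hx, ENNReal.rpow_intCast]

section LayerCake

variable {e : ℝ}

lemma rpow_le_two_rpow_mul_tsum_zpow (he : 0 < e) (a : ℝ≥0∞) :
    a ^ e ≤ 2 ^ e * ∑' n : ℤ, if (2:ℝ≥0∞) ^ n < a then ((2:ℝ≥0∞) ^ n) ^ e else 0 := by
  rcases eq_or_ne a 0 with rfl | ha0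
  · simp [ENNReal.zero_rpow_of_pos he]
  rcases eq_or_ne a ⊤ with rfl | hat
  · have hsum : ∑' n : ℤ, (if (2:ℝ≥0∞) ^ n < ⊤ then ((2:ℝ≥0∞) ^ n) ^ e else 0) = ⊤ := by
      refine top_unique <| (ENNReal.tsum_const_eq_top_of_ne_zero one_ne_zero).symm.le.trans <|
        (ENNReal.tsum_le_tsum fun k : ℕ => ?_).trans
          (ENNReal.tsum_comp_le_tsum_of_injective Nat.cast_injective _)
      rw [if_pos (ENNReal.zpow_lt_top two_ne_zero ofNat_ne_top _), zpow_natCast]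
      exact ENNReal.one_le_rpow (one_le_pow₀ one_le_two) he
    rw [hsum, ENNReal.mul_top (by positivity)]
    exact le_top
  obtain ⟨n, hn_lt, hn_le⟩ := ENNReal.exists_mem_Ioc_zpow ha0 hat one_lt_two ofNat_ne_top
  calc a ^ e ≤ ((2:ℝ≥0∞) ^ (n + 1)) ^ e := ENNReal.rpow_le_rpow hn_le he.le
    _ = 2 ^ e * ((2:ℝ≥0∞) ^ n) ^ e := by
      rw [ENNReal.zpow_add two_ne_zero ofNat_ne_top, zpow_one,
        ENNReal.mul_rpow_of_nonneg _ _ he.le, mul_comm]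
    _ ≤ 2 ^ e * ∑' n : ℤ, if (2:ℝ≥0∞) ^ n < a then ((2:ℝ≥0∞) ^ n) ^ e else 0 := by
      gcongr
      exact (if_pos hn_lt).symm.le.trans (ENNReal.le_tsum n)

lemma tsum_rpow_mul_le_two_rpow_mul_tsum_zpow {ι : Type*} (he : 0 < e) (a w : ι → ℝ≥0∞) :
    ∑' j, a j ^ e * w j ≤
      2 ^ e * ∑' n : ℤ, ((2:ℝ≥0∞) ^ n) ^ e * ∑' j, if (2:ℝ≥0∞) ^ n < a j then w j else 0 := by
  calc ∑' j, a j ^ e * w j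
      ≤ ∑' j, (2 ^ e * ∑' n : ℤ,
          if (2:ℝ≥0∞) ^ n < a j then ((2:ℝ≥0∞) ^ n) ^ e else 0) * w j := by
        gcongr with j
        exact rpow_le_two_rpow_mul_tsum_zpow he _
    _ = 2 ^ e * ∑' n : ℤ, ((2:ℝ≥0∞) ^ n) ^ e *
          ∑' j, if (2:ℝ≥0∞) ^ n < a j then w j else 0 := by
        simp_rw [mul_assoc, ← ENNReal.tsum_mul_right, ← ENNReal.tsum_mul_left]
        rw [ENNReal.tsum_comm]
        refine tsum_congr fun n => tsum_congr fun j => ?_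
        split_ifs <;> simp

lemma tsum_zpow_rpow_le_rpow_mul (he : 0 < e) (s : ℝ≥0∞) :
    ∑' n : ℤ, (if (2:ℝ≥0∞) ^ n < s then ((2:ℝ≥0∞) ^ n) ^ e else 0) ≤
      s ^ e * (1 - ((2:ℝ≥0∞) ^ e)⁻¹)⁻¹ := by
  set c : ℝ≥0∞ := 2 ^ e
  have hc0 : c ≠ 0 := by positivity
  have hct : c ≠ ⊤ := ENNReal.rpow_ne_top_of_nonneg he.le ofNat_ne_top
  rcases eq_or_ne s 0 with rfl | hs0
  · simp
  rcases eq_or_ne s ⊤ with rfl | hst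
  · rw [ENNReal.top_rpow_of_pos he, ENNReal.top_mul
      (ENNReal.inv_ne_zero.2 (ne_top_of_le_ne_top one_ne_top tsub_le_self))]
    exact le_top
  obtain ⟨n₁, hle, hlt⟩ := ENNReal.exists_mem_Ico_zpow hs0 hst one_lt_two ofNat_ne_top
  have hsupp : (Function.support fun n : ℤ =>
      if (2:ℝ≥0∞) ^ n < s then ((2:ℝ≥0∞) ^ n) ^ e else 0) ⊆ Set.range fun k : ℕ => n₁ - k := by
    intro n hn
    have h2n : (2:ℝ≥0∞) ^ n < s := by
      by_contra h
      exact hn (if_neg h)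
    have : n ≤ n₁ := by
      by_contra! h
      exact (ENNReal.zpow_le_of_le one_le_two (by omega : n₁ + 1 ≤ n)).not_gt (h2n.trans hlt)
    exact ⟨(n₁ - n).toNat, by simp only; omega⟩
  have hinj : Function.Injective fun k : ℕ => n₁ - k := fun _ _ h => by simpa using h
  calc ∑' n : ℤ, (if (2:ℝ≥0∞) ^ n < s then ((2:ℝ≥0∞) ^ n) ^ e else 0)
      = ∑' k : ℕ, (if (2:ℝ≥0∞) ^ (n₁ - k) < s then ((2:ℝ≥0∞) ^ (n₁ - k)) ^ e else 0) :=
        (hinj.tsum_eq hsupp).symm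
    _ ≤ ∑' k : ℕ, c ^ n₁ * c⁻¹ ^ k := by
        refine ENNReal.tsum_le_tsum fun k => ?_
        rw [ENNReal.zpow_rpow_comm, ENNReal.zpow_sub hc0 hct, zpow_natCast, ENNReal.inv_pow]
        split_ifs <;> simp
    _ = c ^ n₁ * (1 - c⁻¹)⁻¹ := by rw [ENNReal.tsum_mul_left, ENNReal.tsum_geometric]
    _ ≤ s ^ e * (1 - c⁻¹)⁻¹ := by
        rw [← ENNReal.zpow_rpow_comm]
        gcongr

lemma tsum_zpow_rpow_mul_ite_le {θ : ℝ} (hθ : 1 < θ) (b : ℝ≥0∞) :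
    ∑' n : ℤ, ((2:ℝ≥0∞) ^ n) ^ (θ - 1) * (if (2:ℝ≥0∞) ^ n < 2 * b then b else 0) ≤
      2 ^ (θ - 1) * (1 - ((2:ℝ≥0∞) ^ (θ - 1))⁻¹)⁻¹ * b ^ θ := by
  have hθ1 : 0 < θ - 1 := by linarith
  have hsplit : b ^ θ = b * b ^ (θ - 1) := by
    conv_lhs => rw [show θ = 1 + (θ - 1) by ring]
    rw [ENNReal.rpow_add_of_nonneg _ _ zero_le_one hθ1.le, ENNReal.rpow_one]
  calc ∑' n : ℤ, ((2:ℝ≥0∞) ^ n) ^ (θ - 1) * (if (2:ℝ≥0∞) ^ n < 2 * b then b else 0)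
      = b * ∑' n : ℤ, if (2:ℝ≥0∞) ^ n < 2 * b then ((2:ℝ≥0∞) ^ n) ^ (θ - 1) else 0 := by
        rw [← ENNReal.tsum_mul_left]
        refine tsum_congr fun n => ?_
        split_ifs <;> simp [mul_comm]
    _ ≤ b * ((2 * b) ^ (θ - 1) * (1 - ((2:ℝ≥0∞) ^ (θ - 1))⁻¹)⁻¹) := by
        gcongr
        exact tsum_zpow_rpow_le_rpow_mul hθ1 _
    _ = 2 ^ (θ - 1) * (1 - ((2:ℝ≥0∞) ^ (θ - 1))⁻¹)⁻¹ * b ^ θ := by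
        rw [ENNReal.mul_rpow_of_nonneg _ _ hθ1.le, hsplit]
        ring

end LayerCake

noncomputable def weakStrongConst (θ : ℝ) : ℝ≥0∞ :=
  2 ^ θ * 2 * 2 ^ (θ - 1) * (1 - ((2:ℝ≥0∞) ^ (θ - 1))⁻¹)⁻¹

lemma weakStrongConst_ne_top {θ : ℝ} (hθ : 1 < θ) : weakStrongConst θ ≠ ⊤ := by
  have h2 : (1:ℝ≥0∞) < 2 ^ (θ - 1) :=
    ENNReal.one_lt_rpow one_lt_two (by linarith)
  have hD : (1 - ((2:ℝ≥0∞) ^ (θ - 1))⁻¹)⁻¹ ≠ ⊤ := by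
    rw [ne_eq, ENNReal.inv_eq_top, tsub_eq_zero_iff_le, not_le]
    exact ENNReal.inv_lt_one.2 h2
  exact ENNReal.mul_ne_top (ENNReal.mul_ne_top (ENNReal.mul_ne_top
    (ENNReal.rpow_ne_top_of_nonneg (by linarith) ofNat_ne_top) ofNat_ne_top)
    (ENNReal.rpow_ne_top_of_nonneg (by linarith) ofNat_ne_top)) hD

section WeakType

variable {X ι : Type*} [MeasurableSpace X] {μ : Measure X}

lemma tsum_rpow_mul_le_of_weakType {θ : ℝ} (hθ : 1 < θ) {v : X → ℝ≥0∞} (hv : Measurable v)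
    (a w : ι → ℝ≥0∞)
    (hweak : ∀ n : ℤ, ∑' j, (if (2:ℝ≥0∞) ^ n < a j then w j else 0) ≤
      2 * ((2:ℝ≥0∞) ^ n)⁻¹ * ∫⁻ x, {x | (2:ℝ≥0∞) ^ n < 2 * v x}.indicator v x ∂μ) :
    ∑' j, a j ^ θ * w j ≤ weakStrongConst θ * ∫⁻ x, v x ^ θ ∂μ := by
  set level : ℤ → X → ℝ≥0∞ := fun n => {x | (2:ℝ≥0∞) ^ n < 2 * v x}.indicator v
  have hlevel : ∀ n, Measurable (level n) := fun n =>
    hv.indicator (measurableSet_lt measurable_const (hv.const_mul 2))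
  have hcoeff : ∀ n : ℤ, ((2:ℝ≥0∞) ^ n) ^ θ * (2 * ((2:ℝ≥0∞) ^ n)⁻¹) =
      2 * ((2:ℝ≥0∞) ^ n) ^ (θ - 1) := by
    intro n
    rw [ENNReal.rpow_sub _ _ (ENNReal.zpow_pos two_ne_zero ofNat_ne_top n).ne'
      (ENNReal.zpow_ne_top two_ne_zero ofNat_ne_top n),
      ENNReal.rpow_one, div_eq_mul_inv]
    ring
  have hpointwise : ∀ x, ∑' n : ℤ, ((2:ℝ≥0∞) ^ n) ^ (θ - 1) * level n x ≤
      2 ^ (θ - 1) * (1 - ((2:ℝ≥0∞) ^ (θ - 1))⁻¹)⁻¹ * v x ^ θ := fun x => by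
    simpa only [level, Set.indicator_apply, Set.mem_ofPred_eq] using
      tsum_zpow_rpow_mul_ite_le hθ (v x)
  calc ∑' j, a j ^ θ * w j
      ≤ 2 ^ θ * ∑' n : ℤ, ((2:ℝ≥0∞) ^ n) ^ θ *
          ∑' j, if (2:ℝ≥0∞) ^ n < a j then w j else 0 :=
        tsum_rpow_mul_le_two_rpow_mul_tsum_zpow (by linarith) a w
    _ ≤ 2 ^ θ * ∑' n : ℤ, ((2:ℝ≥0∞) ^ n) ^ θ *
          (2 * ((2:ℝ≥0∞) ^ n)⁻¹ * ∫⁻ x, level n x ∂μ) := by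
        gcongr with n
        exact hweak n
    _ = 2 ^ θ * 2 * ∫⁻ x, ∑' n : ℤ, ((2:ℝ≥0∞) ^ n) ^ (θ - 1) * level n x ∂μ := by
        rw [lintegral_tsum fun n => ((hlevel n).const_mul _).aemeasurable, mul_assoc]
        congr 1
        rw [← ENNReal.tsum_mul_left]
        refine tsum_congr fun n => ?_
        rw [lintegral_const_mul _ (hlevel n), ← mul_assoc, hcoeff, mul_assoc]
    _ ≤ 2 ^ θ * 2 * ∫⁻ x, 2 ^ (θ - 1) * (1 - ((2:ℝ≥0∞) ^ (θ - 1))⁻¹)⁻¹ * v x ^ θ ∂μ := by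
        gcongr with x
        exact hpointwise x
    _ = weakStrongConst θ * ∫⁻ x, v x ^ θ ∂μ := by
        rw [lintegral_const_mul _ (hv.pow_const θ)]
        unfold weakStrongConst
        ring

end WeakType

section Averages

variable {X : Type*} [MeasurableSpace X] {μ : Measure X} {v : X → ℝ≥0∞}

lemma setLIntegral_le_lintegral_rpow_mul (hv : AEMeasurable v μ) {θ : ℝ} (hθ : 1 < θ)
    (S : Set X) :
    ∫⁻ x in S, v x ∂μ ≤ (∫⁻ x, v x ^ θ ∂μ) ^ (1 / θ) * μ S ^ (1 - 1 / θ) := by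
  have hconj : θ.HolderConjugate (θ / (θ - 1)) := Real.HolderConjugate.conjExponent hθ
  have h := ENNReal.lintegral_mul_le_Lp_mul_Lq (μ.restrict S) hconj hv.restrict
    (aemeasurable_const (b := (1:ℝ≥0∞)))
  simp only [Pi.mul_apply, mul_one, ENNReal.one_rpow, lintegral_one,
    Measure.restrict_apply_univ] at h
  rw [show 1 - 1 / θ = 1 / (θ / (θ - 1)) by field_simp]
  exact h.trans (mul_le_mul_left (ENNReal.rpow_le_rpow (setLIntegral_le_lintegral _ _)
    (by positivity)) _)

lemma rpow_mul_measure_le_lintegral_rpow (hv : AEMeasurable v μ) {θ : ℝ} (hθ : 1 < θ)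
    {S : Set X} (hS0 : μ S ≠ 0) (hS : μ S ≠ ⊤) {t : ℝ≥0∞}
    (ht : t * μ S ≤ ∫⁻ x in S, v x ∂μ) :
    t ^ θ * μ S ≤ ∫⁻ x, v x ^ θ ∂μ := by
  have hθ0 : 0 < θ := by linarith
  have hpow : μ S ^ (θ - 1) ≠ 0 := by simp [ENNReal.rpow_eq_zero_iff, hS0, hS]
  have hpow' : μ S ^ (θ - 1) ≠ ⊤ := ENNReal.rpow_ne_top_of_nonneg (by linarith) hS
  have hsplit : μ S ^ θ = μ S * μ S ^ (θ - 1) := by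
    conv_lhs => rw [show θ = 1 + (θ - 1) by ring]
    rw [ENNReal.rpow_add _ _ hS0 hS, ENNReal.rpow_one]
  have h := ENNReal.rpow_le_rpow (ht.trans (setLIntegral_le_lintegral_rpow_mul hv hθ S)) hθ0.le
  rw [ENNReal.mul_rpow_of_nonneg _ _ hθ0.le, ENNReal.mul_rpow_of_nonneg _ _ hθ0.le,
    ← ENNReal.rpow_mul, ← ENNReal.rpow_mul, one_div_mul_cancel hθ0.ne', ENNReal.rpow_one,
    show (1 - 1 / θ) * θ = θ - 1 by field_simp, hsplit, ← mul_assoc] at h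
  exact (ENNReal.mul_le_mul_iff_left hpow hpow').1 h

lemma mul_measure_le_setLIntegral_of_lt_setLAverage {S : Set X} (hS : μ S ≠ ⊤) {t : ℝ≥0∞}
    (ht : t < ⨍⁻ x in S, v x ∂μ) : t * μ S ≤ ∫⁻ x in S, v x ∂μ :=
  (mul_le_mul_left ht.le _).trans_eq (by rw [mul_comm, measure_mul_setLAverage _ hS])

lemma measure_le_of_mul_le_setLIntegral {t : ℝ≥0∞} (ht : t ≠ 0) (htop : t ≠ ⊤)
    {Q : Set X} (hQ : μ Q ≠ ⊤) (h : t * μ Q ≤ ∫⁻ x in Q, v x ∂μ) :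
    μ Q ≤ 2 * t⁻¹ * ∫⁻ x in Q, {x | t < 2 * v x}.indicator v x ∂μ := by
  set I := ∫⁻ x in Q, {x | t < 2 * v x}.indicator v x ∂μ
  have hsmall : ∀ x, v x ≤ t / 2 + {x | t < 2 * v x}.indicator v x := by
    intro x
    by_cases hx : t < 2 * v x
    · rw [Set.indicator_of_mem (show x ∈ {x | t < 2 * v x} from hx)]
      exact le_add_self
    · rw [Set.indicator_of_notMem (show x ∉ {x | t < 2 * v x} from hx), add_zero]
      rw [not_lt] at hx
      exact ENNReal.le_div_iff_mul_le (by simp) (by simp) |>.2 (mul_comm (v x) 2 ▸ hx)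
  have hsplit : ∫⁻ x in Q, v x ∂μ ≤ t / 2 * μ Q + I := by
    calc ∫⁻ x in Q, v x ∂μ ≤ ∫⁻ x in Q, (t / 2 + {x | t < 2 * v x}.indicator v x) ∂μ :=
          lintegral_mono hsmall
      _ = t / 2 * μ Q + I := by rw [lintegral_add_left measurable_const, setLIntegral_const]
  have hhalf : t / 2 * μ Q ≤ I := by
    have hfin : t / 2 * μ Q ≠ ⊤ := ENNReal.mul_ne_top (ENNReal.div_ne_top htop two_ne_zero) hQ
    refine (ENNReal.add_le_add_iff_left hfin).1 ?_
    rw [← add_mul, ENNReal.add_halves]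
    exact h.trans hsplit
  calc μ Q = 2 * t⁻¹ * (t / 2 * μ Q) := by
        rw [← mul_assoc, ← div_eq_mul_inv, ← ENNReal.inv_div (.inl ofNat_ne_top) (.inl two_ne_zero),
          ENNReal.inv_mul_cancel (by simp [ht]) (ENNReal.div_ne_top htop two_ne_zero), one_mul]
    _ ≤ 2 * t⁻¹ * I := by gcongr

end Averages

section DyadicCube

variable {d : ℕ}

lemma mem_dyadicCube_iff {k : ℤ} {m : Fin d → ℤ} {x : EuclideanSpace ℝ (Fin d)} :
    x ∈ dyadicCube d k m ↔ ∀ i, ⌊(2:ℝ) ^ k * x i⌋ = m i := by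
  have h2k : (0:ℝ) < 2 ^ k := by positivity
  refine forall_congr' fun i => ?_
  rw [Int.floor_eq_iff, Set.mem_Ico, zpow_neg, inv_mul_le_iff₀ h2k, lt_inv_mul_iff₀ h2k,
    mul_comm, mul_comm (x i)]

lemma floor_two_zpow_mul_eq_div {k k' : ℤ} (hk : k ≤ k') (y : ℝ) :
    ⌊(2:ℝ) ^ k * y⌋ = ⌊(2:ℝ) ^ k' * y⌋ / 2 ^ (k' - k).toNat := by
  have h : (2:ℝ) ^ k * y = (2:ℝ) ^ k' * y / ((2 ^ (k' - k).toNat : ℕ) : ℝ) := by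
    rw [Nat.cast_pow, Nat.cast_ofNat, ← zpow_natCast, Int.toNat_of_nonneg (by omega),
      zpow_sub₀ two_ne_zero]
    field_simp
  rw [h, Int.floor_div_natCast]
  push_cast
  rfl

lemma dyadicCube_subset_of_le {k k' : ℤ} {m m' : Fin d → ℤ} (hk : k ≤ k')
    (h : (dyadicCube d k m ∩ dyadicCube d k' m').Nonempty) :
    dyadicCube d k' m' ⊆ dyadicCube d k m := by
  obtain ⟨x, hx, hx'⟩ := h
  intro y hy
  rw [mem_dyadicCube_iff] at hx hx' hy ⊢
  intro i
  rw [floor_two_zpow_mul_eq_div hk, hy, ← hx', ← floor_two_zpow_mul_eq_div hk, hx]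

lemma eq_of_dyadicCube_inter_nonempty {k : ℤ} {m m' : Fin d → ℤ}
    (h : (dyadicCube d k m ∩ dyadicCube d k m').Nonempty) : m = m' := by
  obtain ⟨x, hx, hx'⟩ := h
  rw [mem_dyadicCube_iff] at hx hx'
  exact funext fun i => (hx i).symm.trans (hx' i)

lemma dyadicCube_eq_preimage (k : ℤ) (m : Fin d → ℤ) :
    dyadicCube d k m = (MeasurableEquiv.toLp 2 (Fin d → ℝ)).symm ⁻¹'
      Set.univ.pi fun i => Set.Ico ((2:ℝ) ^ (-k) * m i) ((2:ℝ) ^ (-k) * (m i + 1)) := by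
  ext x
  simp only [dyadicCube, MeasurableEquiv.toLp, Set.mem_preimage, Set.mem_pi, Set.mem_univ,
    forall_const, Set.mem_ofPred_eq]
  rfl

lemma measurableSet_dyadicCube (k : ℤ) (m : Fin d → ℤ) :
    MeasurableSet (dyadicCube d k m) := by
  rw [dyadicCube_eq_preimage]
  exact (MeasurableEquiv.toLp 2 (Fin d → ℝ)).symm.measurable
    (MeasurableSet.univ_pi fun _ => measurableSet_Ico)

lemma volume_dyadicCube (k : ℤ) (m : Fin d → ℤ) :
    volume (dyadicCube d k m) = ((2:ℝ≥0∞) ^ (-k)) ^ d := by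
  rw [dyadicCube_eq_preimage,
    (EuclideanSpace.volume_preserving_symm_measurableEquiv_toLp (Fin d)).measure_preimage
      (MeasurableSet.univ_pi fun _ => measurableSet_Ico).nullMeasurableSet,
    volume_pi_pi]
  simp_rw [Real.volume_Ico, ← mul_sub, add_sub_cancel_left, mul_one,
    ENNReal.ofReal_zpow two_pos, ENNReal.ofReal_ofNat]
  rw [Finset.prod_const, Finset.card_univ, Fintype.card_fin]

lemma volume_dyadicCube_ne_zero (k : ℤ) (m : Fin d → ℤ) : volume (dyadicCube d k m) ≠ 0 := by
  rw [volume_dyadicCube]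
  exact pow_ne_zero _ (ENNReal.zpow_pos two_ne_zero ofNat_ne_top _).ne'

lemma volume_dyadicCube_ne_top (k : ℤ) (m : Fin d → ℤ) : volume (dyadicCube d k m) ≠ ⊤ := by
  rw [volume_dyadicCube]
  exact pow_ne_top (ENNReal.zpow_lt_top two_ne_zero ofNat_ne_top _).ne

lemma exists_le_of_volume_dyadicCube_le (hd : 0 < d) {M : ℝ≥0∞} (hM : M ≠ ⊤) :
    ∃ K₀ : ℤ, ∀ k m, volume (dyadicCube d k m) ≤ M → K₀ ≤ k := by
  obtain ⟨n, hn⟩ := ENNReal.exists_nat_gt hM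
  refine ⟨-n, fun k m hkm => ?_⟩
  by_contra! hk
  have h1 : (1:ℝ≥0∞) ≤ 2 ^ (-k) := by
    simpa using ENNReal.zpow_le_of_le one_le_two (by omega : (0:ℤ) ≤ -k)
  have h2 : (n:ℝ≥0∞) ≤ 2 ^ (-k) := calc
    (n:ℝ≥0∞) ≤ 2 ^ n := by exact_mod_cast (Nat.lt_two_pow_self).le
    _ = 2 ^ (n:ℤ) := (zpow_natCast _ _).symm
    _ ≤ 2 ^ (-k) := ENNReal.zpow_le_of_le one_le_two (by omega)
  have := calc M < n := hn
    _ ≤ 2 ^ (-k) := h2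
    _ ≤ (2 ^ (-k)) ^ d := le_self_pow₀ h1 hd.ne'
    _ = volume (dyadicCube d k m) := (volume_dyadicCube k m).symm
  exact (this.trans_le hkm).false

lemma exists_maximal_dyadicCubes (s : Set (ℤ × (Fin d → ℤ))) (hs : BddBelow (Prod.fst '' s)) :
    ∃ P ⊆ s, P.PairwiseDisjoint (fun q => dyadicCube d q.1 q.2) ∧
      ∀ q ∈ s, ∃ q' ∈ P, dyadicCube d q.1 q.2 ⊆ dyadicCube d q'.1 q'.2 := by
  obtain ⟨K₀, hK₀⟩ := hs
  refine ⟨{q ∈ s | ∀ q' ∈ s,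
    (dyadicCube d q.1 q.2 ∩ dyadicCube d q'.1 q'.2).Nonempty → q.1 ≤ q'.1},
    Set.sep_subset _ _, ?_, ?_⟩
  · rintro q ⟨hqs, hq⟩ q' ⟨hqs', hq'⟩ hne
    refine Set.disjoint_iff_inter_eq_empty.2 (Set.not_nonempty_iff_eq_empty.1 fun hint => hne ?_)
    simp only at hint
    have hk : q.1 = q'.1 := le_antisymm (hq q' hqs' hint) (hq' q hqs (Set.inter_comm _ _ ▸ hint))
    rw [hk] at hint
    exact Prod.ext hk (eq_of_dyadicCube_inter_nonempty hint)
  · intro q hq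
    obtain ⟨k, ⟨q', hq's, rfl, hsub⟩, hleast⟩ := Int.exists_least_of_bdd
      (P := fun k => ∃ q' ∈ s, q'.1 = k ∧ dyadicCube d q.1 q.2 ⊆ dyadicCube d q'.1 q'.2)
      ⟨K₀, fun _ ⟨q', hq's, hk, _⟩ => hk ▸ hK₀ ⟨q', hq's, rfl⟩⟩ ⟨q.1, q, hq, rfl, subset_rfl⟩
    refine ⟨q', ⟨hq's, fun q'' hq''s hint => ?_⟩, hsub⟩
    by_contra! hlt
    have hsub' := dyadicCube_subset_of_le hlt.le (Set.inter_comm _ _ ▸ hint)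
    exact (hleast q''.1 ⟨q'', hq''s, rfl, hsub.trans hsub'⟩).not_gt hlt

end DyadicCube

section SparseDyadic

variable {d : ℕ} {ι : Type*} [Countable ι]

lemma exists_le_of_lt_setLAverage_dyadicCube (hd : 0 < d) {θ : ℝ} (hθ : 1 < θ)
    {v : EuclideanSpace ℝ (Fin d) → ℝ≥0∞} (hv : Measurable v) (hN : ∫⁻ x, v x ^ θ ≠ ⊤)
    {t : ℝ≥0∞} (ht : t ≠ 0) (htop : t ≠ ⊤) :
    ∃ K₀ : ℤ, ∀ k m, t < ⨍⁻ x in dyadicCube d k m, v x ∂volume → K₀ ≤ k := by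
  have htθ : t ^ θ ≠ 0 := (ENNReal.rpow_pos (pos_iff_ne_zero.2 ht) htop).ne'
  obtain ⟨K₀, hK₀⟩ := exists_le_of_volume_dyadicCube_le hd (ENNReal.div_ne_top hN htθ)
  refine ⟨K₀, fun k m hkm => hK₀ k m ?_⟩
  rw [ENNReal.le_div_iff_mul_le (.inl htθ)
    (.inl (ENNReal.rpow_ne_top_of_nonneg (by linarith) htop)), mul_comm]
  exact rpow_mul_measure_le_lintegral_rpow hv.aemeasurable hθ (volume_dyadicCube_ne_zero _ _)
    (volume_dyadicCube_ne_top _ _)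
    (mul_measure_le_setLIntegral_of_lt_setLAverage (volume_dyadicCube_ne_top _ _) hkm)

lemma tsum_volume_le_of_lt_setLAverage (hd : 0 < d) {θ : ℝ} (hθ : 1 < θ)
    (k : ι → ℤ) (m : ι → Fin d → ℤ) (E : ι → Set (EuclideanSpace ℝ (Fin d)))
    (hE : ∀ j, MeasurableSet (E j)) (hEsub : ∀ j, E j ⊆ dyadicCube d (k j) (m j))
    (hdisj : Pairwise (Function.onFun Disjoint E))
    {v : EuclideanSpace ℝ (Fin d) → ℝ≥0∞} (hv : Measurable v) (hN : ∫⁻ x, v x ^ θ ≠ ⊤)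
    {t : ℝ≥0∞} (ht : t ≠ 0) (htop : t ≠ ⊤) :
    ∑' j, (if t < ⨍⁻ x in dyadicCube d (k j) (m j), v x ∂volume then volume (E j) else 0) ≤
      2 * t⁻¹ * ∫⁻ x, {x | t < 2 * v x}.indicator v x := by
  set J := {j | t < ⨍⁻ x in dyadicCube d (k j) (m j), v x ∂volume}
  have hmean : ∀ j ∈ J, t * volume (dyadicCube d (k j) (m j)) ≤
      ∫⁻ x in dyadicCube d (k j) (m j), v x := fun j hj =>
    mul_measure_le_setLIntegral_of_lt_setLAverage (volume_dyadicCube_ne_top _ _) hj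
  obtain ⟨K₀, hK₀⟩ := exists_le_of_lt_setLAverage_dyadicCube hd hθ hv hN ht htop
  have hbdd : BddBelow (Prod.fst '' ((fun j => (k j, m j)) '' J)) := by
    refine ⟨K₀, ?_⟩
    rintro _ ⟨_, ⟨j, hj, rfl⟩, rfl⟩
    exact hK₀ _ _ hj
  obtain ⟨P, hPs, hPdisj, hcover⟩ := exists_maximal_dyadicCubes _ hbdd
  have hlevel : ∀ q ∈ P, volume (dyadicCube d q.1 q.2) ≤
      2 * t⁻¹ * ∫⁻ x in dyadicCube d q.1 q.2, {x | t < 2 * v x}.indicator v x := by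
    intro q hq
    obtain ⟨j, hj, rfl⟩ := hPs hq
    exact measure_le_of_mul_le_setLIntegral ht htop (volume_dyadicCube_ne_top _ _) (hmean j hj)
  have hunion : ⋃ j ∈ J, E j ⊆ ⋃ q ∈ P, dyadicCube d q.1 q.2 := by
    refine Set.iUnion₂_subset fun j hj => ?_
    obtain ⟨q, hq, hsub⟩ := hcover _ ⟨j, hj, rfl⟩
    exact (hEsub j).trans (hsub.trans
      (Set.subset_biUnion_of_mem (u := fun q : ℤ × (Fin d → ℤ) => dyadicCube d q.1 q.2) hq))
  calc ∑' j, (if t < ⨍⁻ x in dyadicCube d (k j) (m j), v x ∂volume then volume (E j) else 0)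
      = volume (⋃ j ∈ J, E j) := by
        rw [measure_biUnion J.to_countable (hdisj.set_pairwise J) fun j _ => hE j,
          tsum_subtype J fun j => volume (E j)]
        simp only [Set.indicator_apply, J, Set.mem_ofPred_eq]
    _ ≤ volume (⋃ q ∈ P, dyadicCube d q.1 q.2) := measure_mono hunion
    _ = ∑' q : P, volume (dyadicCube d q.1.1 q.1.2) :=
        measure_biUnion P.to_countable hPdisj fun q _ => measurableSet_dyadicCube _ _
    _ ≤ ∑' q : P, 2 * t⁻¹ *
          ∫⁻ x in dyadicCube d q.1.1 q.1.2, {x | t < 2 * v x}.indicator v x :=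
        ENNReal.tsum_le_tsum fun q => hlevel q q.2
    _ = 2 * t⁻¹ * ∫⁻ x in ⋃ q ∈ P, dyadicCube d q.1 q.2, {x | t < 2 * v x}.indicator v x := by
        rw [ENNReal.tsum_mul_left, lintegral_biUnion P.to_countable
          (fun q _ => measurableSet_dyadicCube _ _) hPdisj]
    _ ≤ 2 * t⁻¹ * ∫⁻ x, {x | t < 2 * v x}.indicator v x :=
        mul_le_mul_right (setLIntegral_le_lintegral _ _) _

lemma tsum_setLAverage_rpow_mul_le (hd : 0 < d) {θ : ℝ} (hθ : 1 < θ)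
    (k : ι → ℤ) (m : ι → Fin d → ℤ) (E : ι → Set (EuclideanSpace ℝ (Fin d)))
    (hE : ∀ j, MeasurableSet (E j)) (hEsub : ∀ j, E j ⊆ dyadicCube d (k j) (m j))
    (hdisj : Pairwise (Function.onFun Disjoint E))
    {v : EuclideanSpace ℝ (Fin d) → ℝ≥0∞} (hv : Measurable v) (hN : ∫⁻ x, v x ^ θ ≠ ⊤) :
    ∑' j, (⨍⁻ x in dyadicCube d (k j) (m j), v x ∂volume) ^ θ * volume (E j) ≤
      weakStrongConst θ * ∫⁻ x, v x ^ θ :=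
  tsum_rpow_mul_le_of_weakType hθ hv _ _ fun n =>
    tsum_volume_le_of_lt_setLAverage hd hθ k m E hE hEsub hdisj hv hN
      (ENNReal.zpow_pos two_ne_zero ofNat_ne_top n).ne'
      (ENNReal.zpow_ne_top two_ne_zero ofNat_ne_top n)

end SparseDyadic

lemma mul_rpow_add_div_rpow_le {K a T : ℝ≥0∞} {s θ r : ℝ} (hs : 0 ≤ s) (hθ : 0 ≤ θ) (hr : 0 < r)
    (hKa : K * a ^ s ≤ T) :
    (K * a ^ (s + θ / r)) ^ r ≤ T ^ r * a ^ θ := by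
  rw [ENNReal.rpow_add_of_nonneg _ _ hs (by positivity), ← mul_assoc,
    ENNReal.mul_rpow_of_nonneg _ _ hr.le, ← ENNReal.rpow_mul, div_mul_cancel₀ _ hr.ne']
  gcongr

lemma tsum_mul_rpow_add_div_rpow_le {ι : Type*} {B a w : ι → ℝ≥0∞} {s θ r : ℝ} {C N : ℝ≥0∞}
    (hs : 0 ≤ s) (hθ : 0 ≤ θ) (hr : 0 < r) (h : ∑' j, a j ^ θ * w j ≤ C * N) :
    (∑' j, (B j * a j ^ (s + θ / r)) ^ r * w j) ^ (1 / r) ≤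
      C ^ (1 / r) * N ^ (1 / r) * ⨆ j, B j * a j ^ s := by
  set T := ⨆ j, B j * a j ^ s
  calc (∑' j, (B j * a j ^ (s + θ / r)) ^ r * w j) ^ (1 / r)
      ≤ (∑' j, T ^ r * (a j ^ θ * w j)) ^ (1 / r) := by
        refine ENNReal.rpow_le_rpow (ENNReal.tsum_le_tsum fun j => ?_) (by positivity)
        rw [← mul_assoc]
        exact mul_le_mul_left
          (mul_rpow_add_div_rpow_le hs hθ hr (le_iSup (fun j => B j * a j ^ s) j)) _
    _ ≤ (T ^ r * (C * N)) ^ (1 / r) := by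
        rw [ENNReal.tsum_mul_left]
        gcongr
    _ = C ^ (1 / r) * N ^ (1 / r) * T := by
        rw [ENNReal.mul_rpow_of_nonneg _ _ (by positivity),
          ENNReal.mul_rpow_of_nonneg _ _ (by positivity), ← ENNReal.rpow_mul,
          mul_one_div_cancel hr.ne', ENNReal.rpow_one]
        ring

theorem stmt16_general (d : ℕ) (α q p r θ₁ θ₂ η : ℝ) (hα0 : 0 < α) (hαd : α < (d : ℝ))
    (hq : 1 < q) (hqp : q < p) (hr : 1 / r = 1 / q - 1 / p)
    (hθ₁ : 1 < θ₁) (hθ₂ : 1 < θ₂) (hexp : 1 / q = 1 / (θ₂ * p) + θ₁ / r) :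
    ∃ C : ℝ≥0∞, C ≠ ⊤ ∧
      ∀ (lam : ℝ), 0 < lam →
      ∀ (ι : Type) (_ : Countable ι) (k : ι → ℤ) (m : ι → Fin d → ℤ)
        (E : ι → Set (EuclideanSpace ℝ (Fin d)))
        (_ : ∀ j, MeasurableSet (E j))
        (_ : ∀ j, E j ⊆ dyadicCube d (k j) (m j))
        (_ : ∀ j, ENNReal.ofReal η * volume (dyadicCube d (k j) (m j)) ≤ volume (E j))
        (_ : Pairwise (Function.onFun Disjoint E))
        (K : ι → ℝ≥0∞)
        (_ : ∀ j, K j = ENNReal.ofReal (min ((lam * (2:ℝ) ^ (-(k j))) ^ α) 1) /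
            (ENNReal.ofReal (lam ^ α) * volume (dyadicCube d (k j) (m j))))
        (v : EuclideanSpace ℝ (Fin d) → ℝ≥0∞) (_ : Measurable v)
        (_ : (∫⁻ x, v x ^ θ₁) ≠ ⊤),
        (∑' j, (K j * volume (dyadicCube d (k j) (m j)) *
            ((∫⁻ x in dyadicCube d (k j) (m j), v x) /
              volume (dyadicCube d (k j) (m j))) ^ (1 / q)) ^ r *
            volume (E j)) ^ (1 / r) ≤
          C * (∫⁻ x, v x ^ θ₁) ^ (1 / r) *
            ⨆ j, K j * volume (dyadicCube d (k j) (m j)) *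
              ((∫⁻ x in dyadicCube d (k j) (m j), v x) /
                volume (dyadicCube d (k j) (m j))) ^ (1 / (θ₂ * p)) := by
  have hd : 0 < d := by exact_mod_cast hα0.trans hαd
  have hr0 : 0 < r := one_div_pos.1 (hr ▸ sub_pos.2 (one_div_lt_one_div_of_lt (by linarith) hqp))
  have hs : 0 ≤ 1 / (θ₂ * p) := one_div_nonneg.2 (mul_nonneg (by linarith) (by linarith))
  refine ⟨weakStrongConst θ₁ ^ (1 / r),
    ENNReal.rpow_ne_top_of_nonneg (by positivity) (weakStrongConst_ne_top hθ₁), ?_⟩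
  intro _ _ ι _ k m E hE hEsub _ hdisj K _ v hv hN
  simp only [← setLAverage_eq, hexp]
  exact tsum_mul_rpow_add_div_rpow_le hs (by linarith) hr0
    (tsum_setLAverage_rpow_mul_le hd hθ₁ k m E hE hEsub hdisj hv hN)

/-- With `K(S) = min((λℓ_S)^α,1)/(λ^α|S|)`, `1 < q < p < ∞`, `1/r = 1/q − 1/p`,
`θ₁, θ₂ > 1`, `1/q = 1/(θ₂p) + θ₁/r` and `‖v‖_{L^{θ₁}}^{θ₁/r} < ∞`:
`[∑_S (K(S)|S|(v(S)/|S|)^{1/q})^r |E_𝒮(S)|]^{1/r}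
  ≲ ‖v‖_{L^{θ₁}}^{θ₁/r} ⋅ sup_S K(S)|S|(v(S)/|S|)^{1/(θ₂p)}`. -/
theorem stmt16 (d : ℕ) (α q p r θ₁ θ₂ η : ℝ) (hα0 : 0 < α) (hαd : α < (d : ℝ))
    (hq : 1 < q) (hqp : q < p) (hr : 1 / r = 1 / q - 1 / p)
    (hθ₁ : 1 < θ₁) (hθ₂ : 1 < θ₂) (hexp : 1 / q = 1 / (θ₂ * p) + θ₁ / r)
    (hη0 : 0 < η) (hη1 : η < 1) :
    ∃ C : ℝ≥0∞, C ≠ ⊤ ∧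
      ∀ (lam : ℝ), 0 < lam →
      ∀ (ι : Type) (_ : Countable ι) (k : ι → ℤ) (m : ι → Fin d → ℤ)
        (E : ι → Set (EuclideanSpace ℝ (Fin d)))
        (_ : ∀ j, MeasurableSet (E j))
        (_ : ∀ j, E j ⊆ dyadicCube d (k j) (m j))
        (_ : ∀ j, ENNReal.ofReal η * volume (dyadicCube d (k j) (m j)) ≤ volume (E j))
        (_ : Pairwise (Function.onFun Disjoint E))
        (K : ι → ℝ≥0∞)
        (_ : ∀ j, K j = ENNReal.ofReal (min ((lam * (2:ℝ) ^ (-(k j))) ^ α) 1) /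
            (ENNReal.ofReal (lam ^ α) * volume (dyadicCube d (k j) (m j))))
        (v : EuclideanSpace ℝ (Fin d) → ℝ≥0∞) (_ : Measurable v)
        (_ : (∫⁻ x, v x ^ θ₁) ≠ ⊤),
        (∑' j, (K j * volume (dyadicCube d (k j) (m j)) *
            ((∫⁻ x in dyadicCube d (k j) (m j), v x) /
              volume (dyadicCube d (k j) (m j))) ^ (1 / q)) ^ r *
            volume (E j)) ^ (1 / r) ≤
          C * (∫⁻ x, v x ^ θ₁) ^ (1 / r) *
            ⨆ j, K j * volume (dyadicCube d (k j) (m j)) *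
              ((∫⁻ x in dyadicCube d (k j) (m j), v x) /
                volume (dyadicCube d (k j) (m j))) ^ (1 / (θ₂ * p)) :=
  stmt16_general d α q p r θ₁ θ₂ η hα0 hαd hq hqp hr hθ₁ hθ₂ hexp
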